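/- Let ≺ be a c-compatible order on A_c, and suppose the factorization poset P_c is totally well-covered with respect to ≺. Then for every x ≤_A y ≤_A c there exists a unique ≺-rising reduced A-factorization of x⁻¹y. -/

import Mathlib

variable {G : Type*} [Group G]

/-- `A` generates `G` as a monoid. -/
def GeneratesM (A : Set G) : Prop :=
  ∀ x : G, ∃ l : List G, (∀ a ∈ l, a ∈ A) ∧ l.prod = x

/-- `A` is closed under `G`-conjugation. -/
def ConjClosed (A : Set G) : Prop :=
  ∀ g a : G, a ∈ A → g * a * g⁻¹ ∈ A

/-- The `A`-length of `x`: minimal number of factors from `A` needed to write `x`. -/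
noncomputable def lenA (A : Set G) (x : G) : ℕ :=
  sInf {n : ℕ | ∃ l : List G, (∀ a ∈ l, a ∈ A) ∧ l.prod = x ∧ l.length = n}

/-- The `A`-prefix order. -/
def leA (A : Set G) (x y : G) : Prop :=
  lenA A x + lenA A (x⁻¹ * y) = lenA A y

/-- The set of reduced `A`-factorizations of `x`, as lists. -/
def RedA (A : Set G) (x : G) : Set (List G) :=
  {l : List G | (∀ a ∈ l, a ∈ A) ∧ l.prod = x ∧ l.length = lenA A x}

/-- `A_c`: the generators occurring below `c`. -/
def Ac (A : Set G) (c : G) : Set G := {a : G | a ∈ A ∧ leA A a c}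

/-- A single Hurwitz move on factorizations. -/
def HurwitzMove : List G → List G → Prop := fun l m =>
  ∃ (p s : List G) (a b : G),
    l = p ++ a :: b :: s ∧ m = p ++ b :: (b⁻¹ * a * b) :: s

/-- `r` is a linear order on the set `S`. -/
def IsLinearOrderOn (S : Set G) (r : G → G → Prop) : Prop :=
  (∀ a ∈ S, r a a) ∧
  (∀ a ∈ S, ∀ b ∈ S, r a b → r b a → a = b) ∧
  (∀ a ∈ S, ∀ b ∈ S, ∀ c ∈ S, r a b → r b c → r a c) ∧
  (∀ a ∈ S, ∀ b ∈ S, r a b ∨ r b a)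

/-- `r` is a `c`-compatible order: every length-2 element below `c` has a unique
rising reduced factorization. -/
def CompatibleOrder (A : Set G) (c : G) (r : G → G → Prop) : Prop :=
  ∀ g : G, leA A g c → lenA A g = 2 →
    ∃! l : List G, l ∈ RedA A g ∧ l.Chain' r

/-- Two factorizations correspond to maximal chains differing in exactly one element. -/
def ChainAdj (l m : List G) : Prop :=
  l ≠ m ∧ ∃ (p s : List G) (a b a' b' : G),
    l = p ++ a :: b :: s ∧ m = p ++ a' :: b' :: s ∧ a * b = a' * b'

/-- Covering relation in the graded factorization poset. -/
def CoversA (A : Set G) (x y : G) : Prop := leA A x y ∧ lenA A y = lenA A x + 1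

/-- `F_≺(a; g)`: upper covers of the atom `a` in `P_g` that also cover a strictly
smaller atom. -/
def Fset (A : Set G) (r : G → G → Prop) (a g : G) : Set G :=
  {h : G | CoversA A a h ∧ leA A h g ∧
    ∃ a' ∈ A, a' ≠ a ∧ r a' a ∧ CoversA A a' h}

/-- `P_c` is well-covered with respect to `r`. -/
def WellCovered (A : Set G) (c : G) (r : G → G → Prop) : Prop :=
  ∀ a ∈ A, leA A a c →
    (Fset A r a c = ∅ ↔ ∀ b ∈ A, leA A b c → r a b)

/-- `P_c` is totally well-covered with respect to `r`. -/
def TotallyWellCovered (A : Set G) (c : G) (r : G → G → Prop) : Prop :=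
  ∀ g : G, leA A g c → WellCovered A g r

/-! If `1 ∈ A`, well-coveredness of `P_a` for an atom `a ≤ c` gives both `1 ≺ a` and `a ≺ 1`,
so `c = 1`. Otherwise the key fact is that a rising reduced factorization `a₁ a₂ ⋯` of `g ≤ c`
starts with the `≺`-minimum of `A_g`. If it did not, well-coveredness would give a rank-two
`h ≤ g` covering `a₁` and some `a' ≺ a₁`; by induction `a₂ ≼ a₁⁻¹h`, so `a₁ · (a₁⁻¹h)` is the
rising factorization of `h`, which by `c`-compatibility starts with `min A_h ≼ a'`, a
contradiction. Uniqueness then follows by peeling off first letters, and existence by prepending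
`min A_g` to a rising factorization of `(min A_g)⁻¹g`. -/

section Length

variable {A : Set G}

lemma lenA_le_length {l : List G} {x : G} (hl : ∀ a ∈ l, a ∈ A) (hx : l.prod = x) :
    lenA A x ≤ l.length :=
  Nat.sInf_le ⟨l, hl, hx, rfl⟩

lemma RedA_nonempty (hgen : GeneratesM A) (x : G) : (RedA A x).Nonempty := by
  obtain ⟨l, hl, hx⟩ := hgen x
  have hne : {n | ∃ l : List G, (∀ a ∈ l, a ∈ A) ∧ l.prod = x ∧ l.length = n}.Nonempty :=
    ⟨l.length, l, hl, hx, rfl⟩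
  obtain ⟨l', hl'⟩ := Nat.sInf_mem hne
  exact ⟨l', hl'⟩

lemma lenA_one : lenA A (1 : G) = 0 :=
  Nat.le_zero.mp (lenA_le_length (l := []) (by simp) rfl)

lemma lenA_eq_zero_iff (hgen : GeneratesM A) {x : G} : lenA A x = 0 ↔ x = 1 := by
  refine ⟨fun h => ?_, fun h => h ▸ lenA_one⟩
  obtain ⟨l, -, hprod, hlen⟩ := RedA_nonempty hgen x
  rw [← hprod, List.eq_nil_of_length_eq_zero (hlen.trans h), List.prod_nil]

lemma mem_of_lenA_eq_one (hgen : GeneratesM A) {x : G} (h : lenA A x = 1) : x ∈ A := by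
  obtain ⟨l, hmem, hprod, hlen⟩ := RedA_nonempty hgen x
  obtain ⟨a, rfl⟩ := List.length_eq_one_iff.mp (hlen.trans h)
  rw [List.prod_singleton] at hprod
  exact hprod ▸ hmem a (List.mem_singleton_self a)

lemma lenA_eq_one_of_mem (hgen : GeneratesM A) (h1 : (1 : G) ∉ A) {a : G} (ha : a ∈ A) :
    lenA A a = 1 := by
  have hle : lenA A a ≤ 1 := lenA_le_length (l := [a]) (by simpa) List.prod_singleton
  have hne : lenA A a ≠ 0 := fun h => h1 ((lenA_eq_zero_iff hgen).mp h ▸ ha)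
  omega

lemma lenA_mul_le (hgen : GeneratesM A) (x y : G) : lenA A (x * y) ≤ lenA A x + lenA A y := by
  obtain ⟨lx, hx, hxprod, hxlen⟩ := RedA_nonempty hgen x
  obtain ⟨ly, hy, hyprod, hylen⟩ := RedA_nonempty hgen y
  rw [← hxlen, ← hylen, ← List.length_append]
  refine lenA_le_length (fun a ha => ?_) (by rw [List.prod_append, hxprod, hyprod])
  exact (List.mem_append.mp ha).elim (hx a) (hy a)

lemma lenA_conj_le (hgen : GeneratesM A) (hconj : ConjClosed A) (u x : G) :
    lenA A (u * x * u⁻¹) ≤ lenA A x := by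
  obtain ⟨l, hl, hprod, hlen⟩ := RedA_nonempty hgen x
  rw [← hlen, ← List.length_map (MulAut.conj u)]
  refine lenA_le_length (fun a ha => ?_) ?_
  · obtain ⟨b, hb, rfl⟩ := List.mem_map.mp ha
    exact hconj u b (hl b hb)
  · rw [← map_list_prod, hprod, MulAut.conj_apply]

end Length

section PrefixOrder

variable {A : Set G}

lemma lenA_le_of_leA {x y : G} (h : leA A x y) : lenA A x ≤ lenA A y :=
  h ▸ Nat.le_add_right _ _

lemma leA_refl (x : G) : leA A x x := by
  rw [leA, inv_mul_cancel, lenA_one, add_zero]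

lemma one_leA (x : G) : leA A 1 x := by
  rw [leA, lenA_one, inv_one, one_mul, zero_add]

lemma eq_of_leA_of_lenA_eq (hgen : GeneratesM A) {x y : G} (hxy : leA A x y)
    (hlen : lenA A x = lenA A y) : x = y := by
  have hquot : lenA A (x⁻¹ * y) = 0 := by unfold leA at hxy; omega
  exact inv_mul_eq_one.mp ((lenA_eq_zero_iff hgen).mp hquot)

lemma leA_trans (hgen : GeneratesM A) {x y z : G} (hxy : leA A x y) (hyz : leA A y z) :
    leA A x z := by
  have hsplit : lenA A (x⁻¹ * z) ≤ lenA A (x⁻¹ * y) + lenA A (y⁻¹ * z) := by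
    simpa only [mul_assoc, mul_inv_cancel_left] using lenA_mul_le hgen (x⁻¹ * y) (y⁻¹ * z)
  have hz : lenA A z ≤ lenA A x + lenA A (x⁻¹ * z) := by
    simpa only [mul_inv_cancel_left] using lenA_mul_le hgen x (x⁻¹ * z)
  unfold leA at *
  omega

-- `h = (x⁻¹h) · (h⁻¹xh)`, and conjugation does not increase length.
lemma inv_mul_leA_self (hgen : GeneratesM A) (hconj : ConjClosed A) {x h : G}
    (hx : leA A x h) : leA A (x⁻¹ * h) h := by
  have hconj_le : lenA A (h⁻¹ * x * h) ≤ lenA A x := by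
    simpa only [inv_inv] using lenA_conj_le hgen hconj h⁻¹ x
  have hcompl : (x⁻¹ * h)⁻¹ * h = h⁻¹ * x * h := by group
  have hsplit : lenA A h ≤ lenA A (x⁻¹ * h) + lenA A (h⁻¹ * x * h) := by
    simpa only [← hcompl, mul_inv_cancel_left] using
      lenA_mul_le hgen (x⁻¹ * h) ((x⁻¹ * h)⁻¹ * h)
  unfold leA at hx ⊢
  rw [hcompl]
  omega

lemma inv_mul_leA_inv_mul (hgen : GeneratesM A) {x h g : G} (hxh : leA A x h)
    (hhg : leA A h g) : leA A (x⁻¹ * h) (x⁻¹ * g) := by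
  have hxg : leA A x g := leA_trans hgen hxh hhg
  have hquot : (x⁻¹ * h)⁻¹ * (x⁻¹ * g) = h⁻¹ * g := by group
  unfold leA at *
  rw [hquot]
  omega

lemma cons_mem_RedA_iff (hgen : GeneratesM A) {a g : G} {t : List G} :
    a :: t ∈ RedA A g ↔ a ∈ A ∧ lenA A a = 1 ∧ leA A a g ∧ t ∈ RedA A (a⁻¹ * g) := by
  simp only [RedA, Set.mem_ofPred_eq, List.mem_cons, forall_eq_or_imp, List.prod_cons,
    List.length_cons, leA]
  constructor
  · rintro ⟨⟨ha, ht⟩, hprod, hlen⟩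
    have hta : t.prod = a⁻¹ * g := by rw [← hprod, inv_mul_cancel_left]
    have ha1 : lenA A a ≤ 1 := lenA_le_length (l := [a]) (by simpa) List.prod_singleton
    have htlen : lenA A (a⁻¹ * g) ≤ t.length := lenA_le_length ht hta
    have hg : lenA A g ≤ lenA A a + lenA A (a⁻¹ * g) := by
      simpa only [mul_inv_cancel_left] using lenA_mul_le hgen a (a⁻¹ * g)
    exact ⟨ha, by omega, by omega, ht, hta, by omega⟩
  · rintro ⟨ha, ha1, hag, ht, hprod, hlen⟩
    exact ⟨⟨ha, ht⟩, by rw [hprod, mul_inv_cancel_left], by omega⟩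

lemma Ac_subset_Ac (hgen : GeneratesM A) {g c : G} (hgc : leA A g c) : Ac A g ⊆ Ac A c :=
  fun _ ⟨ha, hag⟩ => ⟨ha, leA_trans hgen hag hgc⟩

lemma head_mem_Ac (hgen : GeneratesM A) {a g : G} {t : List G} (h : a :: t ∈ RedA A g) :
    a ∈ Ac A g :=
  have h' := (cons_mem_RedA_iff hgen).mp h
  ⟨h'.1, h'.2.2.1⟩

lemma pair_mem_RedA (hgen : GeneratesM A) {a h : G} (ha : a ∈ Ac A h) (hh2 : lenA A h = 2)
    (ha1 : lenA A a = 1) : [a, a⁻¹ * h] ∈ RedA A h := by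
  have hb : lenA A (a⁻¹ * h) = 1 := by have := ha.2; unfold leA at this; omega
  refine ⟨?_, by simp, by simp [hh2]⟩
  simpa using ⟨ha.1, mem_of_lenA_eq_one hgen hb⟩

lemma existsUnique_rising_of_lenA_eq_zero (hgen : GeneratesM A) {r : G → G → Prop} {g : G}
    (hg : lenA A g = 0) : ∃! l : List G, l ∈ RedA A g ∧ l.IsChain r := by
  obtain rfl := (lenA_eq_zero_iff hgen).mp hg
  refine ⟨[], ⟨⟨by simp, rfl, by simp [lenA_one]⟩, List.isChain_nil⟩, ?_⟩
  rintro l ⟨⟨-, -, hlen⟩, -⟩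
  exact List.eq_nil_of_length_eq_zero (hlen.trans hg)

end PrefixOrder

lemma IsLinearOrderOn.exists_forall_rel {α : Type*} {r : α → α → Prop} {S T : Set α}
    (hlin : IsLinearOrderOn S r) (hT : T.Finite) (hTS : T ⊆ S) (hne : T.Nonempty) :
    ∃ m ∈ T, ∀ b ∈ T, r m b := by
  induction T, hT using Set.Finite.induction_on with
  | empty => exact absurd hne Set.not_nonempty_empty
  | @insert a T _ _ ih =>
    have haS : a ∈ S := hTS (Set.mem_insert a T)
    rcases T.eq_empty_or_nonempty with rfl | hTne
    · refine ⟨a, Set.mem_insert a ∅, ?_⟩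
      rintro b (rfl | hb)
      exacts [hlin.1 b haS, (Set.notMem_empty b hb).elim]
    obtain ⟨m, hm, hmin⟩ := ih (fun x hx => hTS (Set.mem_insert_of_mem a hx)) hTne
    have hmS : m ∈ S := hTS (Set.mem_insert_of_mem a hm)
    rcases hlin.2.2.2 a haS m hmS with ham | hma
    · refine ⟨a, Set.mem_insert a T, ?_⟩
      rintro b (rfl | hb)
      · exact hlin.1 b haS
      · exact hlin.2.2.1 a haS m hmS b (hTS (Set.mem_insert_of_mem a hb)) ham (hmin b hb)
    · refine ⟨m, Set.mem_insert_of_mem a hm, ?_⟩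
      rintro b (rfl | hb)
      exacts [hma, hmin b hb]

section Minimum

variable {A : Set G} {c : G} {r : G → G → Prop}

lemma Ac_finite (hgen : GeneratesM A) (h1 : (1 : G) ∉ A) (hfin : (RedA A c).Finite) :
    (Ac A c).Finite := by
  refine (hfin.image (List.headD · 1)).subset fun a ha => ?_
  obtain ⟨t, ht⟩ := RedA_nonempty hgen (a⁻¹ * c)
  refine ⟨a :: t, (cons_mem_RedA_iff hgen).mpr ⟨ha.1, ?_, ha.2, ht⟩, rfl⟩
  exact lenA_eq_one_of_mem hgen h1 ha.1

lemma exists_min_Ac (hgen : GeneratesM A) (h1 : (1 : G) ∉ A) (hfin : (RedA A c).Finite)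
    (hlin : IsLinearOrderOn (Ac A c) r) {g : G} (hgc : leA A g c) (hne : (Ac A g).Nonempty) :
    ∃ m ∈ Ac A g, ∀ b ∈ Ac A g, r m b :=
  hlin.exists_forall_rel ((Ac_finite hgen h1 hfin).subset (Ac_subset_Ac hgen hgc))
    (Ac_subset_Ac hgen hgc) hne

-- `min A_h · (min A_h)⁻¹h` is also a rising factorization of `h`.
lemma CompatibleOrder.forall_rel (hgen : GeneratesM A) (hconj : ConjClosed A)
    (h1 : (1 : G) ∉ A) (hfin : (RedA A c).Finite) (hlin : IsLinearOrderOn (Ac A c) r)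
    (hcomp : CompatibleOrder A c r) {a h : G} (hhc : leA A h c) (hh2 : lenA A h = 2)
    (ha : a ∈ Ac A h) (hrise : r a (a⁻¹ * h)) : ∀ b ∈ Ac A h, r a b := by
  obtain ⟨m, hm, hmin⟩ := exists_min_Ac hgen h1 hfin hlin hhc ⟨a, ha⟩
  have hcompl_len : lenA A (m⁻¹ * h) = 1 := by
    have hmh := hm.2
    unfold leA at hmh
    rw [lenA_eq_one_of_mem hgen h1 hm.1] at hmh
    omega
  have hcompl : m⁻¹ * h ∈ Ac A h :=
    ⟨mem_of_lenA_eq_one hgen hcompl_len, inv_mul_leA_self hgen hconj hm.2⟩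
  obtain ⟨l, -, huniq⟩ := hcomp h hhc hh2
  have hma : [a, a⁻¹ * h] = [m, m⁻¹ * h] :=
    (huniq _ ⟨pair_mem_RedA hgen ha hh2 (lenA_eq_one_of_mem hgen h1 ha.1),
      List.isChain_pair.mpr hrise⟩).trans
    (huniq _ ⟨pair_mem_RedA hgen hm hh2 (lenA_eq_one_of_mem hgen h1 hm.1),
      List.isChain_pair.mpr (hmin _ hcompl)⟩).symm
  rw [List.cons.inj hma |>.1]
  exact hmin

end Minimum

section Rising

variable {A : Set G} {c : G} {r : G → G → Prop}

lemma lenA_eq_zero_of_one_mem (hgen : GeneratesM A) (hlin : IsLinearOrderOn (Ac A c) r)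
    (hwc : TotallyWellCovered A c r) (h1 : (1 : G) ∈ A) : lenA A c = 0 := by
  by_contra hc
  obtain ⟨_ | ⟨a, t⟩, hred⟩ := RedA_nonempty hgen c
  · exact hc hred.2.2.symm
  obtain ⟨ha, ha1, hac, -⟩ := (cons_mem_RedA_iff hgen).mp hred
  have hwa : WellCovered A a r := hwc a hac
  have hF1 : Fset A r 1 a = ∅ := by
    refine Set.eq_empty_iff_forall_notMem.mpr ?_
    rintro h ⟨⟨-, hh⟩, -, a', -, ha'ne, -, -, hh'⟩
    rw [lenA_one] at hh
    exact ha'ne ((lenA_eq_zero_iff hgen).mp (by omega))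
  have hFa : Fset A r a a = ∅ := by
    refine Set.eq_empty_iff_forall_notMem.mpr ?_
    rintro h ⟨⟨-, hh⟩, hha, -⟩
    have := lenA_le_of_leA hha
    omega
  have hr1a : r 1 a := (hwa 1 h1 (one_leA a)).mp hF1 a ha (leA_refl a)
  have hra1 : r a 1 := (hwa a ha (leA_refl a)).mp hFa 1 h1 (one_leA a)
  have ha_one : a = 1 := hlin.2.1 a ⟨ha, hac⟩ 1 ⟨h1, one_leA c⟩ hra1 hr1a
  rw [ha_one, lenA_one] at ha1
  exact zero_ne_one ha1

theorem head_rel_of_rising (hgen : GeneratesM A) (hconj : ConjClosed A) (h1 : (1 : G) ∉ A)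
    (hfin : (RedA A c).Finite) (hlin : IsLinearOrderOn (Ac A c) r)
    (hcomp : CompatibleOrder A c r) (hwc : TotallyWellCovered A c r) (t : List G) {a g : G}
    (hgc : leA A g c) (hred : a :: t ∈ RedA A g) (hrise : (a :: t).IsChain r) :
    ∀ b ∈ Ac A g, r a b := by
  induction t generalizing a g with
  | nil =>
    obtain rfl : a = g := by simpa using hred.2.1
    intro b hb
    obtain rfl : b = a := eq_of_leA_of_lenA_eq hgen hb.2 (by
      rw [lenA_eq_one_of_mem hgen h1 hb.1, lenA_eq_one_of_mem hgen h1 (hred.1 a (by simp))])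
    exact hlin.1 b ⟨hb.1, hgc⟩
  | cons a₂ t ih =>
    obtain ⟨ha, ha1, hag, htred⟩ := (cons_mem_RedA_iff hgen).mp hred
    have hg'c : leA A (a⁻¹ * g) c := leA_trans hgen (inv_mul_leA_self hgen hconj hag) hgc
    by_contra! ⟨b₀, hb₀, hnr⟩
    obtain ⟨h, ⟨hah, hh2⟩, hhg, a', ha', ha'ne, ha'r, ha'h⟩ : (Fset A r a g).Nonempty :=
      Set.nonempty_iff_ne_empty.mpr fun hF => hnr ((hwc g hgc a ha hag).mp hF b₀ hb₀.1 hb₀.2)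
    rw [ha1] at hh2
    have hhc : leA A h c := leA_trans hgen hhg hgc
    have hb_len : lenA A (a⁻¹ * h) = 1 := by unfold leA at hah; omega
    have hb : a⁻¹ * h ∈ Ac A (a⁻¹ * g) :=
      ⟨mem_of_lenA_eq_one hgen hb_len, inv_mul_leA_inv_mul hgen hah hhg⟩
    have hra₂b : r a₂ (a⁻¹ * h) := ih hg'c htred hrise.tail _ hb
    have hrab : r a (a⁻¹ * h) :=
      hlin.2.2.1 a ⟨ha, leA_trans hgen hag hgc⟩ a₂
        (Ac_subset_Ac hgen hg'c (head_mem_Ac hgen htred)) _ (Ac_subset_Ac hgen hg'c hb)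
        (List.rel_of_isChain_cons_cons hrise) hra₂b
    have hra' : r a a' :=
      hcomp.forall_rel hgen hconj h1 hfin hlin hhc hh2 ⟨ha, hah⟩ hrab a' ⟨ha', ha'h.1⟩
    exact ha'ne (hlin.2.1 a' ⟨ha', leA_trans hgen ha'h.1 hhc⟩ a ⟨ha, leA_trans hgen hag hgc⟩
      ha'r hra')

theorem eq_of_rising (hgen : GeneratesM A) (hconj : ConjClosed A) (h1 : (1 : G) ∉ A)
    (hfin : (RedA A c).Finite) (hlin : IsLinearOrderOn (Ac A c) r)
    (hcomp : CompatibleOrder A c r) (hwc : TotallyWellCovered A c r) {l₁ l₂ : List G} {g : G}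
    (hgc : leA A g c) (h₁ : l₁ ∈ RedA A g ∧ l₁.IsChain r) (h₂ : l₂ ∈ RedA A g ∧ l₂.IsChain r) :
    l₁ = l₂ := by
  induction l₁ generalizing g l₂ with
  | nil =>
    have hg : lenA A g = 0 := h₁.1.2.2.symm
    exact (List.eq_nil_of_length_eq_zero (h₂.1.2.2.trans hg)).symm
  | cons a t ih =>
    obtain _ | ⟨a', s⟩ := l₂
    · have hlen := h₁.1.2.2.trans h₂.1.2.2.symm
      simp at hlen
    have ha := head_mem_Ac hgen h₁.1
    have ha' := head_mem_Ac hgen h₂.1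
    obtain rfl : a = a' := hlin.2.1 a (Ac_subset_Ac hgen hgc ha) a' (Ac_subset_Ac hgen hgc ha')
      (head_rel_of_rising hgen hconj h1 hfin hlin hcomp hwc t hgc h₁.1 h₁.2 a' ha')
      (head_rel_of_rising hgen hconj h1 hfin hlin hcomp hwc s hgc h₂.1 h₂.2 a ha)
    have hg'c : leA A (a⁻¹ * g) c := leA_trans hgen (inv_mul_leA_self hgen hconj ha.2) hgc
    obtain ⟨-, -, -, ht⟩ := (cons_mem_RedA_iff hgen).mp h₁.1
    obtain ⟨-, -, -, hs⟩ := (cons_mem_RedA_iff hgen).mp h₂.1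
    rw [ih hg'c ⟨ht, h₁.2.tail⟩ ⟨hs, h₂.2.tail⟩]

theorem exists_rising (hgen : GeneratesM A) (hconj : ConjClosed A) (h1 : (1 : G) ∉ A)
    (hfin : (RedA A c).Finite) (hlin : IsLinearOrderOn (Ac A c) r) {g : G} (hgc : leA A g c) :
    ∃ l : List G, l ∈ RedA A g ∧ l.IsChain r := by
  obtain ⟨n, hn⟩ : ∃ n, lenA A g = n := ⟨_, rfl⟩
  induction n generalizing g with
  | zero => exact (existsUnique_rising_of_lenA_eq_zero hgen hn).exists
  | succ n ih =>
    obtain ⟨_ | ⟨a, t⟩, hred⟩ := RedA_nonempty hgen g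
    · have hlen := hred.2.2.trans hn
      simp at hlen
    obtain ⟨m, hm, hmin⟩ := exists_min_Ac hgen h1 hfin hlin hgc ⟨a, head_mem_Ac hgen hred⟩
    have hm1 : lenA A m = 1 := lenA_eq_one_of_mem hgen h1 hm.1
    have hg'g : leA A (m⁻¹ * g) g := inv_mul_leA_self hgen hconj hm.2
    obtain ⟨l, hl, hlr⟩ :=
      ih (leA_trans hgen hg'g hgc) (by have hmg := hm.2; unfold leA at hmg; omega)
    refine ⟨m :: l, (cons_mem_RedA_iff hgen).mpr ⟨hm.1, hm1, hm.2, hl⟩, ?_⟩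
    obtain _ | ⟨b, l⟩ := l
    · exact List.isChain_singleton m
    · exact List.isChain_cons_cons.mpr
        ⟨hmin b (Ac_subset_Ac hgen hg'g (head_mem_Ac hgen hl)), hlr⟩

end Rising

theorem unique_rising_of_totally_well_covered (A : Set G) (hgen : GeneratesM A)
    (hconj : ConjClosed A) (c : G) (hfin : (RedA A c).Finite)
    (r : G → G → Prop) (hlin : IsLinearOrderOn (Ac A c) r)
    (hcomp : CompatibleOrder A c r)
    (hwc : TotallyWellCovered A c r) :
    ∀ x y : G, leA A x y → leA A y c →
      ∃! l : List G, l ∈ RedA A (x⁻¹ * y) ∧ l.Chain' r := by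
  intro x y hxy hyc
  have hgc : leA A (x⁻¹ * y) c := leA_trans hgen (inv_mul_leA_self hgen hconj hxy) hyc
  by_cases h1 : (1 : G) ∈ A
  · have hc : lenA A c = 0 := lenA_eq_zero_of_one_mem hgen hlin hwc h1
    exact existsUnique_rising_of_lenA_eq_zero hgen
      (Nat.eq_zero_of_le_zero (hc ▸ lenA_le_of_leA hgc))
  · obtain ⟨l, hl⟩ := exists_rising hgen hconj h1 hfin hlin hgc
    exact ⟨l, hl, fun l' hl' => eq_of_rising hgen hconj h1 hfin hlin hcomp hwc hgc hl' hl⟩
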